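/- Let G = (V, E) be a hypergraph with a linear order < on the edge set E. Then for every natural number x, the chromatic polynomial satisfies χ(G, x) = Σ_{A ⊆ E, A contains no broken cycle} (-1)^{|A|} x^{k(G[A])}, where the sum ranges over all edge subsets A ⊆ E such that B ⊄ A for every broken cycle B ∈ 𝔅(G, <). -/

import Mathlib

open scoped Classical

/-- A hypergraph with vertex type `α` and edges indexed by elements of `ι`
(the indexing allows parallel edges, i.e. a multiset of edges). Every edge is a
nonempty subset of the vertex set. -/
structure IdxHypergraph (α ι : Type*) where
  verts : Finset α
  edges : Finset ι
  inc : ι → Finset α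
  inc_nonempty : ∀ i ∈ edges, (inc i).Nonempty
  inc_sub : ∀ i ∈ edges, inc i ⊆ verts

namespace IdxHypergraph

variable {α ι : Type*}

/-- `u` and `v` are connected via a sequence of edges from `E'` in which consecutive
edges share a vertex. -/
def Conn (inc : ι → Finset α) (E' : Finset ι) (u v : α) : Prop :=
  Relation.ReflTransGen (fun a b => ∃ i ∈ E', a ∈ inc i ∧ b ∈ inc i) u v

/-- The number of connected components of the hypergraph with vertex set `V'` and
edge set `E'` (isolated vertices form their own components). -/
noncomputable def numComponents (inc : ι → Finset α) (V' : Finset α) (E' : Finset ι) : ℕ :=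
  (V'.image fun v => V'.filter fun u => Conn inc E' u v).card

/-- `(V₁, E₁)` is a subgraph of `(V₂, E₂)` (w.r.t. the incidence function `inc`). -/
def IsSubgraph (inc : ι → Finset α) (V₁ : Finset α) (E₁ : Finset ι)
    (V₂ : Finset α) (E₂ : Finset ι) : Prop :=
  V₁ ⊆ V₂ ∧ E₁ ⊆ E₂ ∧ ∀ i ∈ E₁, inc i ⊆ V₁

/-- The hypergraph `(V', E')` is δ-cyclic: it has a subgraph with at least one edge
such that deleting any of its edges does not change the number of connected
components. -/
def IsDeltaCyclic (inc : ι → Finset α) (V' : Finset α) (E' : Finset ι) : Prop :=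
  ∃ V'' E'', IsSubgraph inc V'' E'' V' E' ∧ E''.Nonempty ∧
    ∀ i ∈ E'', numComponents inc V'' E'' = numComponents inc V'' (E''.erase i)

/-- The hypergraph `(V', E')` is a δ-cycle: it is δ-cyclic and has no proper
δ-cyclic subgraph. -/
def IsDeltaCycle (inc : ι → Finset α) (V' : Finset α) (E' : Finset ι) : Prop :=
  IsDeltaCyclic inc V' E' ∧
    ∀ V'' E'', IsSubgraph inc V'' E'' V' E' → (V'', E'') ≠ (V', E') →
      ¬ IsDeltaCyclic inc V'' E''

/-- A proper coloring of `G` with colors in `Fin x`: no edge has all its vertices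
mapped to the same color. -/
def ProperColoring (G : IdxHypergraph α ι) (x : ℕ) (φ : G.verts → Fin x) : Prop :=
  ∀ i ∈ G.edges, ¬ ∃ c : Fin x, ∀ v : G.verts, (v : α) ∈ G.inc i → φ v = c

/-- The number of proper `x`-colorings of `G`, i.e. the value `χ(G, x)` of the
chromatic polynomial. -/
noncomputable def chromaticCount (G : IdxHypergraph α ι) (x : ℕ) : ℕ :=
  Nat.card {φ : G.verts → Fin x // G.ProperColoring x φ}

section Order

variable [LinearOrder ι]

/-- `B` is a broken cycle of `G` w.r.t. the linear order on edges: `B` arises from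
deleting the maximal edge of (the edge set of) a δ-cycle that is a subgraph of `G`. -/
def IsBrokenCycle (G : IdxHypergraph α ι) (B : Finset ι) : Prop :=
  ∃ V_C E_C e, IsSubgraph G.inc V_C E_C G.verts G.edges ∧
    IsDeltaCycle G.inc V_C E_C ∧ e ∈ E_C ∧ (∀ i ∈ E_C, i ≤ e) ∧ B = E_C.erase e

/-- The edge `e` closes the broken cycle `B`: `B ∪ {e}` is the edge set of a
δ-cycle in `G`. -/
def Closes (G : IdxHypergraph α ι) (B : Finset ι) (e : ι) : Prop :=
  ∃ V_C, IsSubgraph G.inc V_C (insert e B) G.verts G.edges ∧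
    IsDeltaCycle G.inc V_C (insert e B)

/-- `e` is the minimal edge closing the broken cycle `B`, i.e. `e = e(B)`. -/
def IsMinCloser (G : IdxHypergraph α ι) (B : Finset ι) (e : ι) : Prop :=
  G.Closes B e ∧ ∀ e', G.Closes B e' → e ≤ e'

/-- `e` is the maximal edge closing the broken cycle `B`, i.e. `e = ē(B)`. -/
def IsMaxCloser (G : IdxHypergraph α ι) (B : Finset ι) (e : ι) : Prop :=
  G.Closes B e ∧ ∀ e', G.Closes B e' → e' ≤ e

/-- `A` contains at least one broken cycle, and
`e = m(A) = min { e(B) : B ∈ 𝔅(G, <), B ⊆ A }`. -/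
def IsMinClosingEdge (G : IdxHypergraph α ι) (A : Finset ι) (e : ι) : Prop :=
  (∃ B, G.IsBrokenCycle B ∧ B ⊆ A ∧ G.IsMinCloser B e) ∧
    ∀ B e', G.IsBrokenCycle B → B ⊆ A → G.IsMinCloser B e' → e ≤ e'

end Order

end IdxHypergraph

/-!
Inclusion–exclusion over the sets of monochromatic edges gives Whitney's expansion
`χ(G, x) = Σ_{A ⊆ E} (-1)^|A| x^k(G[A])`, because a coloring is monochromatic on every edge of `A`
exactly when it is constant on the components of `G[A]`.

The terms of the edge sets `A` that contain a broken cycle cancel in pairs. Let `e` be the least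
edge that is the largest edge of a δ-cycle `C` of `G` with `C \ {e} ⊆ A`. Toggling `e` in `A` flips
the sign, keeps `k(G[A])` because the vertices of `e` are already connected through `C \ {e}`
(deleting an edge of a δ-cycle does not disconnect anything), and keeps `e` itself, since the
candidates `e' ≤ e` only involve edges below `e`.
-/

namespace Finset

open scoped symmDiff

variable {ι : Type*} [DecidableEq ι] {A : Finset ι} {e : ι}

lemma symmDiff_singleton_of_mem (h : e ∈ A) : A ∆ {e} = A.erase e := by
  ext i
  by_cases hi : i = e <;> simp [hi, h, mem_symmDiff]

lemma symmDiff_singleton_of_notMem (h : e ∉ A) : A ∆ {e} = insert e A := by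
  ext i
  by_cases hi : i = e <;> simp [hi, h, mem_symmDiff]

lemma erase_symmDiff_singleton (A : Finset ι) (e : ι) : (A ∆ {e}).erase e = A.erase e := by
  ext i
  by_cases hi : i = e <;> simp [hi, mem_symmDiff]

lemma neg_one_pow_card_symmDiff_singleton (A : Finset ι) (e : ι) :
    (-1 : ℤ) ^ #(A ∆ {e}) = -(-1) ^ #A := by
  by_cases he : e ∈ A
  · rw [symmDiff_singleton_of_mem he, ← card_erase_add_one he, pow_succ]
    ring
  · rw [symmDiff_singleton_of_notMem he, card_insert_of_notMem he, pow_succ]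
    ring

end Finset

namespace IdxHypergraph

open scoped symmDiff

variable {α ι : Type*}

section Connectivity

variable {inc : ι → Finset α}

lemma Conn.mono {E₁ E₂ : Finset ι} (h : E₁ ⊆ E₂) {u v : α} (hc : Conn inc E₁ u v) :
    Conn inc E₂ u v :=
  Relation.ReflTransGen.mono (fun _ _ ⟨i, hi, hab⟩ => ⟨i, h hi, hab⟩) _ _ hc

lemma Conn.symm {E' : Finset ι} {u v : α} (hc : Conn inc E' u v) : Conn inc E' v u :=
  Relation.ReflTransGen.mono (fun _ _ ⟨i, hi, ha, hb⟩ => ⟨i, hi, hb, ha⟩) _ _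
    (Relation.ReflTransGen.swap v u hc)

lemma conn_insert_iff [DecidableEq ι] {A : Finset ι} {e : ι}
    (h : ∀ a b, a ∈ inc e → b ∈ inc e → Conn inc A a b) {u v : α} :
    Conn inc (insert e A) u v ↔ Conn inc A u v := by
  refine ⟨fun hc => Relation.reflTransGen_closed ?_ _ _ hc, Conn.mono (Finset.subset_insert e A)⟩
  rintro a b ⟨i, hi, ha, hb⟩
  rcases Finset.mem_insert.1 hi with rfl | hiA
  · exact h a b ha hb
  · exact .single ⟨i, hiA, ha, hb⟩

noncomputable def component (inc : ι → Finset α) (V' : Finset α) (E' : Finset ι) (v : α) :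
    Finset α :=
  V'.filter fun u => Conn inc E' u v

lemma numComponents_eq_card_image_component (V' : Finset α) (E' : Finset ι) :
    numComponents inc V' E' = (V'.image (component inc V' E')).card :=
  rfl

lemma component_eq_component_iff {V' : Finset α} {E' : Finset ι} {u v : α} (hu : u ∈ V') :
    component inc V' E' u = component inc V' E' v ↔ Conn inc E' u v := by
  refine ⟨fun h => ?_, fun h => ?_⟩
  · have hu' : u ∈ component inc V' E' u := Finset.mem_filter.2 ⟨hu, .refl⟩
    rw [h] at hu'
    exact (Finset.mem_filter.1 hu').2
  · ext w
    simp only [component, Finset.mem_filter, and_congr_right_iff]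
    exact fun _ => ⟨fun hw => hw.trans h, fun hw => hw.trans h.symm⟩

lemma numComponents_congr {V' : Finset α} {E₁ E₂ : Finset ι}
    (h : ∀ u v, Conn inc E₁ u v ↔ Conn inc E₂ u v) :
    numComponents inc V' E₁ = numComponents inc V' E₂ := by
  simp only [numComponents, h]

/-- Every component of `E₂` is a union of components of `E₁ ⊆ E₂`; if there are equally many,
the two partitions coincide. -/
lemma Conn.of_numComponents_eq {V' : Finset α} {E₁ E₂ : Finset ι} (hE : E₁ ⊆ E₂)
    (hk : numComponents inc V' E₁ = numComponents inc V' E₂) {u v : α} (hu : u ∈ V')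
    (hv : v ∈ V') (hc : Conn inc E₂ u v) : Conn inc E₁ u v := by
  set merge : Finset α → Finset α := fun S => V'.filter fun w => ∃ s ∈ S, Conn inc E₂ w s
  have merge_component : ∀ v ∈ V', merge (component inc V' E₁ v) = component inc V' E₂ v := by
    intro v hv
    ext w
    simp only [merge, component, Finset.mem_filter]
    exact ⟨fun ⟨hw, s, ⟨_, hs⟩, hws⟩ => ⟨hw, hws.trans (hs.mono hE)⟩,
      fun ⟨hw, hwv⟩ => ⟨hw, v, ⟨hv, .refl⟩, hwv⟩⟩
  have himage :
      (V'.image (component inc V' E₁)).image merge = V'.image (component inc V' E₂) := by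
    rw [Finset.image_image]
    exact Finset.image_congr merge_component
  have hinj : Set.InjOn merge (V'.image (component inc V' E₁)) :=
    Finset.injOn_of_card_image_eq (himage ▸ hk.symm)
  rw [← component_eq_component_iff hu] at hc ⊢
  refine hinj (Finset.mem_image_of_mem _ hu) (Finset.mem_image_of_mem _ hv) ?_
  simp only [merge_component u hu, merge_component v hv, hc]

lemma IsDeltaCycle.numComponents_erase [DecidableEq ι] {V_C : Finset α} {E_C : Finset ι}
    (hC : IsDeltaCycle inc V_C E_C) {e : ι} (he : e ∈ E_C) :
    numComponents inc V_C (E_C.erase e) = numComponents inc V_C E_C := by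
  obtain ⟨⟨V', E', hsub, hne, hdel⟩, hmin⟩ := hC
  obtain ⟨rfl, rfl⟩ : V' = V_C ∧ E' = E_C := by
    by_contra hproper
    exact hmin V' E' hsub (by simpa using hproper)
      ⟨V', E', ⟨subset_rfl, subset_rfl, hsub.2.2⟩, hne, hdel⟩
  convert (hdel e he).symm

lemma IsDeltaCycle.conn_erase [DecidableEq ι] {V_C : Finset α} {E_C : Finset ι}
    (hC : IsDeltaCycle inc V_C E_C) (hinc : ∀ i ∈ E_C, inc i ⊆ V_C) {e : ι} (he : e ∈ E_C)
    {a b : α} (ha : a ∈ inc e) (hb : b ∈ inc e) : Conn inc (E_C.erase e) a b :=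
  Conn.of_numComponents_eq (Finset.erase_subset e E_C) (hC.numComponents_erase he)
    (hinc e he ha) (hinc e he hb) (.single ⟨e, he, ha, hb⟩)

lemma IsDeltaCycle.numComponents_insert [DecidableEq ι] {V_C : Finset α} {E_C : Finset ι}
    (hC : IsDeltaCycle inc V_C E_C) (hinc : ∀ i ∈ E_C, inc i ⊆ V_C) {e : ι} (he : e ∈ E_C)
    {V' : Finset α} {A : Finset ι} (hA : E_C.erase e ⊆ A) :
    numComponents inc V' (insert e A) = numComponents inc V' A :=
  numComponents_congr fun _ _ =>
    conn_insert_iff fun _ _ ha hb => (hC.conn_erase hinc he ha hb).mono hA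

end Connectivity

section Colorings

variable (G : IdxHypergraph α ι) (x : ℕ)

noncomputable def monoColorings (i : ι) : Finset (G.verts → Fin x) :=
  Finset.univ.filter fun φ => ∃ c, ∀ v : G.verts, (v : α) ∈ G.inc i → φ v = c

lemma chromaticCount_eq_card_inf_compl :
    G.chromaticCount x = (G.edges.inf fun i => (G.monoColorings x i)ᶜ).card := by
  rw [chromaticCount, Nat.card_eq_fintype_card, Fintype.card_subtype]
  congr 1
  ext φ
  simp [Finset.mem_inf, ProperColoring, monoColorings]

variable {G x}

lemma forall_mem_monoColorings_iff {A : Finset ι} (hA : A ⊆ G.edges) (φ : G.verts → Fin x) :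
    (∀ i ∈ A, φ ∈ G.monoColorings x i) ↔ ∀ u v : G.verts, Conn G.inc A u v → φ u = φ v := by
  simp only [monoColorings, Finset.mem_filter, Finset.mem_univ, true_and]
  refine ⟨fun hmono u v huv => ?_, fun hconst i hi => ?_⟩
  · suffices ∀ a b, Conn G.inc A a b → ∀ (ha : a ∈ G.verts) (hb : b ∈ G.verts),
        φ ⟨a, ha⟩ = φ ⟨b, hb⟩ from this u v huv u.2 v.2
    intro a b hab
    induction hab with
    | refl => exact fun _ _ => rfl
    | tail _ hstep ih =>
      obtain ⟨i, hi, hb, hc⟩ := hstep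
      obtain ⟨col, hcol⟩ := hmono i hi
      have hbV := G.inc_sub i (hA hi) hb
      exact fun ha hcV => (ih ha hbV).trans ((hcol ⟨_, hbV⟩ hb).trans (hcol ⟨_, hcV⟩ hc).symm)
  · obtain ⟨w, hw⟩ := G.inc_nonempty i (hA hi)
    exact ⟨φ ⟨w, G.inc_sub i (hA hi) hw⟩, fun v hv => hconst _ _ (.single ⟨i, hi, hv, hw⟩)⟩

lemma card_inf_monoColorings {A : Finset ι} (hA : A ⊆ G.edges) :
    (A.inf (G.monoColorings x)).card = x ^ numComponents G.inc G.verts A := by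
  set comp : G.verts → Finset α := fun v => component G.inc G.verts A v
  have hker : ∀ φ, φ ∈ A.inf (G.monoColorings x) ↔ Setoid.ker comp ≤ Setoid.ker φ := by
    intro φ
    rw [Finset.mem_inf, forall_mem_monoColorings_iff hA]
    exact forall₂_congr fun u v => by
      rw [Setoid.ker_def, component_eq_component_iff u.2]; rfl
  have hrange : Set.range comp = ↑(G.verts.image (component G.inc G.verts A)) := by
    ext S
    simp [comp]
  calc (A.inf (G.monoColorings x)).card
      = Nat.card {φ : G.verts → Fin x // Setoid.ker comp ≤ Setoid.ker φ} := by
        rw [← Nat.card_eq_finsetCard]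
        exact Nat.card_congr (Equiv.subtypeEquivRight hker)
    _ = Nat.card (Quotient (Setoid.ker comp) → Fin x) := Nat.card_congr (Setoid.liftEquiv _)
    _ = x ^ Nat.card (Set.range comp) := by
        rw [Nat.card_fun, Nat.card_fin, Nat.card_congr (Setoid.quotientKerEquivRange comp)]
    _ = x ^ numComponents G.inc G.verts A := by
        rw [hrange, Nat.card_coe_set_eq, Set.ncard_coe_finset,
          numComponents_eq_card_image_component]

theorem chromaticCount_eq_sum_powerset :
    (G.chromaticCount x : ℤ) =
      ∑ A ∈ G.edges.powerset, (-1 : ℤ) ^ A.card * (x : ℤ) ^ numComponents G.inc G.verts A := by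
  rw [chromaticCount_eq_card_inf_compl, Finset.inclusion_exclusion_card_inf_compl]
  refine Finset.sum_congr rfl fun A hA => ?_
  rw [card_inf_monoColorings (Finset.mem_powerset.1 hA), Nat.cast_pow]

end Colorings

section Order

variable [LinearOrder ι] (G : IdxHypergraph α ι)

noncomputable def closingEdges (A : Finset ι) : Finset ι :=
  G.edges.filter fun e => ∃ V_C E_C, IsSubgraph G.inc V_C E_C G.verts G.edges ∧
    IsDeltaCycle G.inc V_C E_C ∧ e ∈ E_C ∧ (∀ i ∈ E_C, i ≤ e) ∧ E_C.erase e ⊆ A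

variable {G}

lemma exists_isBrokenCycle_subset_iff {A : Finset ι} :
    (∃ B, G.IsBrokenCycle B ∧ B ⊆ A) ↔ (G.closingEdges A).Nonempty := by
  constructor
  · rintro ⟨_, ⟨V_C, E_C, e, hsub, hC, he, hmax, rfl⟩, hA⟩
    exact ⟨e, Finset.mem_filter.2 ⟨hsub.2.1 he, V_C, E_C, hsub, hC, he, hmax, hA⟩⟩
  · rintro ⟨e, he⟩
    obtain ⟨-, V_C, E_C, hsub, hC, he, hmax, hA⟩ := Finset.mem_filter.1 he
    exact ⟨E_C.erase e, ⟨V_C, E_C, e, hsub, hC, he, hmax, rfl⟩, hA⟩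

lemma mem_closingEdges_of_erase_subset {A A' : Finset ι} {e e' : ι} (hA : A.erase e ⊆ A')
    (he' : e' ≤ e) (h : e' ∈ G.closingEdges A) : e' ∈ G.closingEdges A' := by
  obtain ⟨hE, V_C, E_C, hsub, hC, heC, hmax, hB⟩ := Finset.mem_filter.1 h
  refine Finset.mem_filter.2 ⟨hE, V_C, E_C, hsub, hC, heC, hmax, fun i hi => hA ?_⟩
  have hlt : i < e' :=
    lt_of_le_of_ne (hmax i (Finset.mem_of_mem_erase hi)) (Finset.ne_of_mem_erase hi)
  exact Finset.mem_erase.2 ⟨(hlt.trans_le he').ne, hB hi⟩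

lemma mem_closingEdges_symmDiff_iff {A : Finset ι} {e e' : ι} (he' : e' ≤ e) :
    e' ∈ G.closingEdges (A ∆ {e}) ↔ e' ∈ G.closingEdges A := by
  refine ⟨mem_closingEdges_of_erase_subset ?_ he', mem_closingEdges_of_erase_subset ?_ he'⟩
  · rw [Finset.erase_symmDiff_singleton]
    exact Finset.erase_subset e A
  · rw [← Finset.erase_symmDiff_singleton]
    exact Finset.erase_subset e _

lemma min'_closingEdges_symmDiff {A : Finset ι} (h : (G.closingEdges A).Nonempty)
    (h' : (G.closingEdges (A ∆ {(G.closingEdges A).min' h})).Nonempty) :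
    (G.closingEdges (A ∆ {(G.closingEdges A).min' h})).min' h' = (G.closingEdges A).min' h := by
  refine (Finset.min'_eq_iff _ _ _).2
    ⟨(mem_closingEdges_symmDiff_iff le_rfl).2 (Finset.min'_mem _ h), fun b hb => le_of_not_gt ?_⟩
  intro hlt
  exact hlt.not_ge (Finset.min'_le _ b ((mem_closingEdges_symmDiff_iff hlt.le).1 hb))

lemma numComponents_symmDiff_of_mem_closingEdges {A : Finset ι} {e : ι}
    (he : e ∈ G.closingEdges A) :
    numComponents G.inc G.verts (A ∆ {e}) = numComponents G.inc G.verts A := by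
  obtain ⟨-, V_C, E_C, hsub, hC, heC, -, hB⟩ := Finset.mem_filter.1 he
  by_cases heA : e ∈ A
  · have hB' : E_C.erase e ⊆ A.erase e := Finset.subset_erase.2 ⟨hB, Finset.notMem_erase e E_C⟩
    rw [Finset.symmDiff_singleton_of_mem heA, ← hC.numComponents_insert hsub.2.2 heC hB',
      Finset.insert_erase heA]
  · rw [Finset.symmDiff_singleton_of_notMem heA, hC.numComponents_insert hsub.2.2 heC hB]

theorem sum_closingEdges_nonempty_eq_zero (x : ℕ) :
    ∑ A ∈ G.edges.powerset.filter (fun A => (G.closingEdges A).Nonempty),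
      (-1 : ℤ) ^ A.card * (x : ℤ) ^ numComponents G.inc G.verts A = 0 := by
  have hnonempty : ∀ A ∈ G.edges.powerset.filter (fun A => (G.closingEdges A).Nonempty),
      (G.closingEdges A).Nonempty := fun A hA => (Finset.mem_filter.1 hA).2
  refine Finset.sum_involution (fun A hA => A ∆ {(G.closingEdges A).min' (hnonempty A hA)})
    (fun A hA => ?_) (fun A hA _ => ?_) (fun A hA => ?_) (fun A hA => ?_)
  · rw [numComponents_symmDiff_of_mem_closingEdges (Finset.min'_mem _ _),
      Finset.neg_one_pow_card_symmDiff_singleton]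
    ring
  · simp
  · have hmem := Finset.min'_mem _ (hnonempty A hA)
    refine Finset.mem_filter.2 ⟨Finset.mem_powerset.2 ?_,
      ⟨_, (mem_closingEdges_symmDiff_iff le_rfl).2 hmem⟩⟩
    exact Finset.symmDiff_subset_union.trans (Finset.union_subset
      (Finset.mem_powerset.1 (Finset.mem_filter.1 hA).1)
      (Finset.singleton_subset_iff.2 (Finset.mem_filter.1 hmem).1))
  · simp only [min'_closingEdges_symmDiff, symmDiff_symmDiff_cancel_right]

end Order

end IdxHypergraph

open IdxHypergraph in
/-- Broken-cycle Theorem for hypergraphs: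
`χ(G, x) = Σ_{A ⊆ E, no broken cycle ⊆ A} (-1)^{|A|} x^{k(G[A])}`. -/
theorem chromaticCount_eq_sum_brokenCycleFree {α ι : Type*} [LinearOrder ι]
    (G : IdxHypergraph α ι) (x : ℕ) :
    (G.chromaticCount x : ℤ) =
      ∑ A ∈ G.edges.powerset.filter fun A => ∀ B, G.IsBrokenCycle B → ¬ B ⊆ A,
        (-1 : ℤ) ^ A.card * (x : ℤ) ^ numComponents G.inc G.verts A := by
  rw [chromaticCount_eq_sum_powerset,
    ← Finset.sum_filter_add_sum_filter_not _ fun A => (G.closingEdges A).Nonempty,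
    sum_closingEdges_nonempty_eq_zero, zero_add]
  refine Finset.sum_congr (Finset.filter_congr fun A _ => ?_) fun _ _ => rfl
  rw [← exists_isBrokenCycle_subset_iff]
  simp only [not_exists, not_and]
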